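/- The doubling constant of the metric space of (equivalence classes of) real-valued time series of complexity at most m under the discrete Fréchet distance is at least 2^m: there is a time series x ∈ ℝ^m and a radius r > 0 such that the ball of radius r around x contains 2^m time series, no two of which lie in a common ball of radius r/2. -/

import Mathlib

/-!
Centre `x i = 4 i`, radius `1`, and for each `A ⊆ {1, …, m}` the series `4 i ± 1`, with sign `+`
exactly on `A`. The diagonal traversal puts each of these series within `1` of `x`. If the series of
`A` and `B` were both within `1/2` of a common `c`, pick `i ∈ A \ B`: some traversal matches `i` to an
index `j` of `c`, and another matches `j` to an index `i'` of the series of `B`, so the values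
`4 i + 1` and `4 i' ± 1` are less than `2` apart. Among the values `4 i' ± 1`, only `4 i + 1` itself
is that close to `4 i + 1`, and the series of `B` never takes it (at index `i` it is `4 i - 1`).
The spacing `4` (rather than `3`) is what lets this single chain of matched points suffice, without
the triangle inequality for the discrete Fréchet distance.
-/

open scoped Classical

def IsStep (p q : ℕ × ℕ) : Prop :=
  (q.1 = p.1 + 1 ∧ q.2 = p.2) ∨ (q.1 = p.1 ∧ q.2 = p.2 + 1) ∨
    (q.1 = p.1 + 1 ∧ q.2 = p.2 + 1)

def IsTraversal (m ℓ : ℕ) (T : List (ℕ × ℕ)) : Prop :=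
  T.head? = some (1, 1) ∧ T.getLast? = some (m, ℓ) ∧ T.Chain' IsStep

noncomputable def travCost (x y : ℕ → ℝ) (T : List (ℕ × ℕ)) : ℝ :=
  (T.map (fun p => |x p.1 - y p.2|)).foldr max 0

/-- The discrete Fréchet distance between time series `x ∈ ℝ^m` and `y ∈ ℝ^ℓ`
(indexed by `1,…,m` and `1,…,ℓ` respectively). -/
noncomputable def dF (m ℓ : ℕ) (x y : ℕ → ℝ) : ℝ :=
  sInf {c | ∃ T, IsTraversal m ℓ T ∧ travCost x y T = c}

theorem List.mem_iff_of_isChain_le_le_succ {L : List ℕ}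
    (hL : L.IsChain fun a b => a ≤ b ∧ b ≤ a + 1) {s t : ℕ}
    (hs : L.head? = some s) (ht : L.getLast? = some t) (i : ℕ) :
    i ∈ L ↔ s ≤ i ∧ i ≤ t := by
  induction L generalizing s i with
  | nil => simp at hs
  | cons a l ih =>
    obtain rfl : a = s := by simpa using hs
    cases l with
    | nil =>
      obtain rfl : a = t := by simpa using ht
      simp only [List.mem_singleton]
      omega
    | cons b l =>
      rw [List.isChain_cons_cons] at hL
      rw [List.getLast?_cons_cons] at ht
      have hb := (ih hL.2 rfl ht b).1 List.mem_cons_self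
      rw [List.mem_cons, ih hL.2 rfl ht i]
      omega

theorem IsStep.fst_le {p q : ℕ × ℕ} (h : IsStep p q) : p.1 ≤ q.1 ∧ q.1 ≤ p.1 + 1 := by
  rcases h with h | h | h <;> omega

theorem IsStep.snd_le {p q : ℕ × ℕ} (h : IsStep p q) : p.2 ≤ q.2 ∧ q.2 ≤ p.2 + 1 := by
  rcases h with h | h | h <;> omega

namespace IsTraversal

variable {m ℓ : ℕ} {T : List (ℕ × ℕ)}

theorem mem_map_fst_iff (hT : IsTraversal m ℓ T) (i : ℕ) :
    i ∈ T.map Prod.fst ↔ 1 ≤ i ∧ i ≤ m :=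
  List.mem_iff_of_isChain_le_le_succ
    (List.isChain_map_of_isChain _ (fun _ _ => IsStep.fst_le) hT.2.2)
    (by simp [hT.1]) (by simp [hT.2.1]) i

theorem mem_map_snd_iff (hT : IsTraversal m ℓ T) (j : ℕ) :
    j ∈ T.map Prod.snd ↔ 1 ≤ j ∧ j ≤ ℓ :=
  List.mem_iff_of_isChain_le_le_succ
    (List.isChain_map_of_isChain _ (fun _ _ => IsStep.snd_le) hT.2.2)
    (by simp [hT.1]) (by simp [hT.2.1]) j

theorem one_le (hT : IsTraversal m ℓ T) : 1 ≤ m := by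
  have h11 : ((1, 1) : ℕ × ℕ) ∈ T := List.mem_of_mem_head? hT.1
  exact ((hT.mem_map_fst_iff 1).1 (List.mem_map_of_mem (f := Prod.fst) h11)).2

theorem snoc {p q : ℕ} (hT : IsTraversal m ℓ T) (hstep : IsStep (m, ℓ) (p, q)) :
    IsTraversal p q (T ++ [(p, q)]) := by
  obtain ⟨hhead, hlast, hchain⟩ := hT
  refine ⟨?_, by simp, ?_⟩
  · cases T with
    | nil => simp at hhead
    | cons a T => simpa using hhead
  · refine List.isChain_append.2 ⟨hchain, List.isChain_singleton _, ?_⟩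
    rintro a ha b hb
    simp_all

end IsTraversal

theorem exists_isTraversal {m ℓ : ℕ} (hm : 1 ≤ m) (hℓ : 1 ≤ ℓ) : ∃ T, IsTraversal m ℓ T := by
  induction m, hm using Nat.le_induction with
  | base =>
    induction ℓ, hℓ using Nat.le_induction with
    | base => exact ⟨[(1, 1)], ⟨rfl, rfl, List.isChain_singleton _⟩⟩
    | succ ℓ _ ih =>
      obtain ⟨T, hT⟩ := ih
      exact ⟨_, hT.snoc (Or.inr (Or.inl ⟨rfl, rfl⟩))⟩
  | succ m _ ih =>
    obtain ⟨T, hT⟩ := ih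
    exact ⟨_, hT.snoc (Or.inl ⟨rfl, rfl⟩)⟩

theorem exists_isTraversal_diag {m : ℕ} (hm : 1 ≤ m) :
    ∃ T, IsTraversal m m T ∧ ∀ p ∈ T, p.1 = p.2 := by
  induction m, hm using Nat.le_induction with
  | base => exact ⟨[(1, 1)], ⟨rfl, rfl, List.isChain_singleton _⟩, by simp⟩
  | succ m _ ih =>
    obtain ⟨T, hT, hdiag⟩ := ih
    refine ⟨_, hT.snoc (Or.inr (Or.inr ⟨rfl, rfl⟩)), ?_⟩
    simp only [List.mem_append, List.mem_singleton]
    rintro p (hp | rfl)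
    exacts [hdiag p hp, rfl]

theorem abs_sub_le_travCost {x y : ℕ → ℝ} {T : List (ℕ × ℕ)} {p : ℕ × ℕ} (hp : p ∈ T) :
    |x p.1 - y p.2| ≤ travCost x y T :=
  List.le_max_of_le' 0 (List.mem_map_of_mem hp) le_rfl

theorem travCost_nonneg (x y : ℕ → ℝ) (T : List (ℕ × ℕ)) : 0 ≤ travCost x y T := by
  induction T with
  | nil => exact le_rfl
  | cons _ _ ih => exact le_max_of_le_right ih

theorem travCost_le {x y : ℕ → ℝ} {T : List (ℕ × ℕ)} {b : ℝ} (hb : 0 ≤ b)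
    (h : ∀ p ∈ T, |x p.1 - y p.2| ≤ b) : travCost x y T ≤ b := by
  induction T with
  | nil => exact hb
  | cons p T ih =>
    exact max_le (h p List.mem_cons_self) (ih fun q hq => h q (List.mem_cons_of_mem _ hq))

theorem dF_le_of_abs_sub_le {m : ℕ} {x y : ℕ → ℝ} {b : ℝ} (hb : 0 ≤ b)
    (h : ∀ i, 1 ≤ i → i ≤ m → |x i - y i| ≤ b) : dF m m x y ≤ b := by
  rcases Nat.eq_zero_or_pos m with rfl | hm
  · have hempty : {c | ∃ T, IsTraversal 0 0 T ∧ travCost x y T = c} = ∅ :=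
      Set.eq_empty_of_forall_notMem fun _ ⟨_, hT, _⟩ => absurd hT.one_le (by norm_num)
    rwa [dF, hempty, Real.sInf_empty]
  obtain ⟨T, hT, hdiag⟩ := exists_isTraversal_diag hm
  refine csInf_le_of_le ⟨0, ?_⟩ ⟨T, hT, rfl⟩ (travCost_le hb fun p hp => ?_)
  · rintro _ ⟨T', -, rfl⟩
    exact travCost_nonneg _ _ _
  · have hp1 := (hT.mem_map_fst_iff p.1).1 (List.mem_map_of_mem hp)
    rw [← hdiag p hp]
    exact h p.1 hp1.1 hp1.2

theorem exists_isTraversal_travCost_lt_of_dF_lt {m ℓ : ℕ} {x y : ℕ → ℝ} {a : ℝ}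
    (hm : 1 ≤ m) (hℓ : 1 ≤ ℓ) (h : dF m ℓ x y < a) :
    ∃ T, IsTraversal m ℓ T ∧ travCost x y T < a := by
  obtain ⟨T, hT⟩ := exists_isTraversal hm hℓ
  obtain ⟨_, ⟨T', hT', rfl⟩, hlt⟩ :=
    exists_lt_of_csInf_lt (s := {c | ∃ T, IsTraversal m ℓ T ∧ travCost x y T = c})
      ⟨_, T, hT, rfl⟩ h
  exact ⟨T', hT', hlt⟩

theorem exists_abs_sub_lt_of_dF_lt {m m' ℓ : ℕ} {x y c : ℕ → ℝ} {a b : ℝ}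
    (hm' : 1 ≤ m') (hℓ : 1 ≤ ℓ) (hx : dF m ℓ x c < a) (hy : dF m' ℓ y c < b)
    {i : ℕ} (hi : 1 ≤ i) (him : i ≤ m) : ∃ i', |x i - y i'| < a + b := by
  obtain ⟨T, hT, hTa⟩ := exists_isTraversal_travCost_lt_of_dF_lt (hi.trans him) hℓ hx
  obtain ⟨T', hT', hT'b⟩ := exists_isTraversal_travCost_lt_of_dF_lt hm' hℓ hy
  obtain ⟨p, hpT, rfl⟩ := List.mem_map.1 ((hT.mem_map_fst_iff i).2 ⟨hi, him⟩)
  have hp := (hT.mem_map_snd_iff p.2).1 (List.mem_map_of_mem hpT)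
  obtain ⟨q, hqT', hqp⟩ := List.mem_map.1 ((hT'.mem_map_snd_iff p.2).2 hp)
  refine ⟨q.1, (abs_sub_le _ (c p.2) _).trans_lt (add_lt_add ?_ ?_)⟩
  · exact (abs_sub_le_travCost hpT).trans_lt hTa
  · rw [abs_sub_comm, ← hqp]
    exact (abs_sub_le_travCost hqT').trans_lt hT'b

noncomputable def offsetSeries (A : Finset ℕ) (i : ℕ) : ℝ :=
  4 * i + if i ∈ A then 1 else -1

theorem offsetSeries_injective : Function.Injective offsetSeries := by
  intro A B h
  ext i
  have hi := congrFun h i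
  simp only [offsetSeries] at hi
  split_ifs at hi <;> norm_num at hi <;> tauto

theorem abs_sub_offsetSeries (A : Finset ℕ) (i : ℕ) : |4 * (i : ℝ) - offsetSeries A i| = 1 := by
  unfold offsetSeries
  split_ifs <;> norm_num

theorem two_le_abs_offsetSeries_sub {A B : Finset ℕ} {i : ℕ} (hA : i ∈ A) (hB : i ∉ B) (i' : ℕ) :
    2 ≤ |offsetSeries A i - offsetSeries B i'| := by
  simp only [offsetSeries, if_pos hA]
  rcases lt_trichotomy i' i with h | rfl | h
  · have : (i' : ℝ) + 1 ≤ i := by exact_mod_cast h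
    rw [le_abs]
    left
    split_ifs <;> linarith
  · rw [if_neg hB]
    norm_num
  · have : (i : ℝ) + 1 ≤ i' := by exact_mod_cast h
    rw [le_abs]
    right
    split_ifs <;> linarith

theorem not_dF_offsetSeries_le_half {m m' : ℕ} {A B : Finset ℕ} {i : ℕ} (hi : 1 ≤ i) (him : i ≤ m)
    (hA : i ∈ A) (hB : i ∉ B) (hm' : 1 ≤ m') (c : ℕ → ℝ) :
    ¬(dF m m' (offsetSeries A) c ≤ 1 / 2 ∧ dF m m' (offsetSeries B) c ≤ 1 / 2) := by
  rintro ⟨hAc, hBc⟩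
  have half_lt_one : (1 / 2 : ℝ) < 1 := by norm_num
  obtain ⟨i', hi'⟩ := exists_abs_sub_lt_of_dF_lt (hi.trans him) hm'
    (hAc.trans_lt half_lt_one) (hBc.trans_lt half_lt_one) hi him
  linarith [two_le_abs_offsetSeries_sub hA hB i']

theorem stmt13_general (m : ℕ) :
    ∃ (x : ℕ → ℝ) (r : ℝ), 0 < r ∧ ∃ S : Finset (ℕ → ℝ), S.card = 2 ^ m ∧
      (∀ y ∈ S, dF m m x y ≤ r) ∧
      ∀ y ∈ S, ∀ y' ∈ S, y ≠ y' →
        ∀ m' : ℕ, 1 ≤ m' → m' ≤ m → ∀ c : ℕ → ℝ,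
          ¬(dF m m' y c ≤ r / 2 ∧ dF m m' y' c ≤ r / 2) := by
  refine ⟨fun i => 4 * i, 1, one_pos, (Finset.Icc 1 m).powerset.image offsetSeries, ?_, ?_, ?_⟩
  · rw [Finset.card_image_of_injective _ offsetSeries_injective, Finset.card_powerset,
      Nat.card_Icc, Nat.add_sub_cancel]
  · simp only [Finset.forall_mem_image]
    exact fun A _ => dF_le_of_abs_sub_le zero_le_one fun i _ _ => (abs_sub_offsetSeries A i).le
  · simp only [Finset.forall_mem_image, Finset.mem_powerset]
    intro A hA B hB hne m' hm' _ c
    obtain ⟨i, hi⟩ : ∃ i, ¬(i ∈ A ↔ i ∈ B) := by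
      simpa [Finset.ext_iff] using ne_of_apply_ne offsetSeries hne
    by_cases hiA : i ∈ A
    · obtain ⟨hi1, him⟩ := Finset.mem_Icc.1 (hA hiA)
      exact not_dF_offsetSeries_le_half hi1 him hiA (by tauto) hm' c
    · obtain ⟨hi1, him⟩ := Finset.mem_Icc.1 (hB (by tauto : i ∈ B))
      exact fun h => not_dF_offsetSeries_le_half hi1 him (by tauto) hiA hm' c h.symm

/-- Doubling lower bound: there is a center `x` of complexity m and a radius r
such that the r-ball around `x` contains 2^m series of complexity m, no two of
which lie in a common ball of radius r/2 (centered at any series of complexity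
at most m). -/
theorem stmt13 (m : ℕ) (hm : 1 ≤ m) :
    ∃ (x : ℕ → ℝ) (r : ℝ), 0 < r ∧ ∃ S : Finset (ℕ → ℝ), S.card = 2 ^ m ∧
      (∀ y ∈ S, dF m m x y ≤ r) ∧
      ∀ y ∈ S, ∀ y' ∈ S, y ≠ y' →
        ∀ m' : ℕ, 1 ≤ m' → m' ≤ m → ∀ c : ℕ → ℝ,
          ¬(dF m m' y c ≤ r / 2 ∧ dF m m' y' c ≤ r / 2) :=
  stmt13_general m
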